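/- arXiv:1311.4854 — 5 statements merged into one kernel-verified Lean document; each statement's English description precedes it below -/
import Mathlib

section
/- For any finite set B of closed line segments in ℝ² (a barrier), the coverage R(B) = {p ∈ ℝ² : every line through p intersects the union of B} is a closed subset of ℝ². -/
/-! The line through `p` in direction `v` meets `U` iff `p ∈ U + ℝ v`, so the coverage of `U` is
the intersection of the sets `U + ℝ v` over `v ≠ 0`. A compact set plus a closed set is closed,
and the union of finitely many segments is compact. -/

open Set Pointwise

noncomputable section

abbrev Pt := EuclideanSpace ℝ (Fin 2)

/-- The line through `p` with direction `v`. -/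
def lineThrough (p v : Pt) : Set Pt := {x | ∃ t : ℝ, x = p + t • v}

/-- The coverage of a set `U`: points such that every line through them meets `U`. -/
def coverage (U : Set Pt) : Set Pt :=
  {p | ∀ v : Pt, v ≠ 0 → (lineThrough p v ∩ U).Nonempty}

/-- A barrier: a finite set of closed line segments in the plane. -/
def IsBarrier (B : Set (Set Pt)) : Prop :=
  B.Finite ∧ ∀ S ∈ B, ∃ a b : Pt, S = segment ℝ a b

/-- Unit vector at angle `θ`. -/
def dir (θ : ℝ) : Pt := (WithLp.equiv 2 (Fin 2 → ℝ)).symm ![Real.cos θ, Real.sin θ]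

theorem lineThrough_inter_nonempty_iff {p v : Pt} {U : Set Pt} :
    (lineThrough p v ∩ U).Nonempty ↔ p ∈ U + (Submodule.span ℝ {v} : Set Pt) := by
  constructor
  · rintro ⟨x, ⟨t, rfl⟩, hxU⟩
    exact ⟨p + t • v, hxU, -t • v, Submodule.mem_span_singleton.2 ⟨-t, rfl⟩, by module⟩
  · rintro ⟨u, hu, w, hw, rfl⟩
    obtain ⟨r, rfl⟩ := Submodule.mem_span_singleton.1 hw
    exact ⟨u, ⟨-r, by module⟩, hu⟩

theorem coverage_eq_iInter (U : Set Pt) :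
    coverage U = ⋂ v ≠ (0 : Pt), U + (Submodule.span ℝ {v} : Set Pt) := by
  ext p
  simp only [coverage, mem_ofPred_eq, mem_iInter, lineThrough_inter_nonempty_iff]

theorem IsCompact.isClosed_coverage {U : Set Pt} (hU : IsCompact U) :
    IsClosed (coverage U) := by
  rw [coverage_eq_iInter]
  exact isClosed_biInter fun v _ ↦
    (Submodule.span ℝ {v}).closed_of_finiteDimensional.add_left_of_isCompact hU

theorem IsBarrier.isCompact_sUnion {B : Set (Set Pt)} (hB : IsBarrier B) :
    IsCompact (⋃₀ B) := by
  refine hB.1.isCompact_sUnion fun S hS ↦ ?_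
  obtain ⟨a, b, rfl⟩ := hB.2 S hS
  rw [segment_eq_image_lineMap]
  exact isCompact_Icc.image AffineMap.lineMap_continuous

/-- The coverage of a barrier is a closed subset of the plane. -/
theorem coverage_isClosed (B : Set (Set Pt)) (hB : IsBarrier B) :
    IsClosed (coverage (⋃₀ B)) :=
  hB.isCompact_sUnion.isClosed_coverage
end
end

section
/- If the union of a barrier B is a connected set that is not contained in a single line, then R(B) equals the convex hull of ⋃B. -/
open Set

noncomputable section

/-! A line through `p` with direction `v` is a level set of the functional `x ↦ v₀ x₁ - v₁ x₀`.
This functional maps the connected set `⋃B` onto an interval, which therefore contains the image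
of the convex hull: every line through a point of the hull meets `⋃B`. Conversely, the hull is
that of the finitely many segment endpoints, hence closed, so a point outside it is strictly
separated from it by a functional, and the line through the point along the kernel of that
functional misses `⋃B`. -/

theorem IsPreconnected.exists_mem_apply_eq_of_mem_convexHull {E : Type*} [AddCommGroup E]
    [Module ℝ E] [TopologicalSpace E] {U : Set E} (hU : IsPreconnected U) (φ : E →L[ℝ] ℝ)
    {p : E} (hp : p ∈ convexHull ℝ U) : ∃ c ∈ U, φ c = φ p := by
  have hconv : Convex ℝ (φ '' U) :=
    convex_iff_ordConnected.2 (hU.image φ φ.continuous.continuousOn).ordConnected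
  have : φ p ∈ convexHull ℝ (φ '' U) :=
    (φ : E →ₗ[ℝ] ℝ).image_convexHull U ▸ mem_image_of_mem φ hp
  rwa [hconv.convexHull_eq] at this

theorem exists_eq_smul_of_cross_eq_zero {v w : Pt} (hv : v ≠ 0)
    (h : v 0 * w 1 - v 1 * w 0 = 0) : ∃ t : ℝ, w = t • v := by
  by_cases h0 : v 0 = 0
  · have h1 : v 1 ≠ 0 := fun h1 => hv (by ext i; fin_cases i <;> simp [h0, h1])
    have hw0 : w 0 = 0 := by simpa [h0, h1] using h
    refine ⟨w 1 / v 1, ?_⟩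
    ext i; fin_cases i <;> simp [h0, hw0, h1]
  · refine ⟨w 0 / v 0, ?_⟩
    ext i; fin_cases i
    · simp [h0]
    · simp only [Fin.mk_one, PiLp.smul_apply, smul_eq_mul]
      field_simp
      linarith

theorem convexHull_subset_coverage {U : Set Pt} (hU : IsPreconnected U) :
    convexHull ℝ U ⊆ coverage U := by
  intro p hp v hv
  let cross : Pt →L[ℝ] ℝ := v 0 • EuclideanSpace.proj 1 - v 1 • EuclideanSpace.proj 0
  obtain ⟨c, hcU, hc⟩ := hU.exists_mem_apply_eq_of_mem_convexHull cross hp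
  obtain ⟨t, ht⟩ : ∃ t : ℝ, c - p = t • v := by
    refine exists_eq_smul_of_cross_eq_zero hv ?_
    simp only [cross, sub_apply, smul_apply, PiLp.proj_apply, smul_eq_mul] at hc
    simp only [PiLp.sub_apply]
    linear_combination hc
  exact ⟨c, ⟨t, by rw [← ht, add_sub_cancel]⟩, hcU⟩

theorem exists_ne_zero_apply_eq_zero (φ : Pt →L[ℝ] ℝ) : ∃ v ≠ 0, φ v = 0 := by
  have hker : LinearMap.ker (φ : Pt →ₗ[ℝ] ℝ) ≠ ⊥ :=
    LinearMap.ker_ne_bot_of_finrank_lt (by simp)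
  obtain ⟨v, hv, hv0⟩ := (Submodule.ne_bot_iff _).1 hker
  exact ⟨v, hv0, hv⟩

theorem coverage_subset_convexHull {U : Set Pt} (hU : IsClosed (convexHull ℝ U)) :
    coverage U ⊆ convexHull ℝ U := by
  intro p hp
  by_contra hpU
  obtain ⟨φ, u, hφp, hφU⟩ := geometric_hahn_banach_point_closed (convex_convexHull ℝ U) hU hpU
  obtain ⟨v, hv, hφv⟩ := exists_ne_zero_apply_eq_zero φ
  obtain ⟨x, ⟨t, rfl⟩, hxU⟩ := hp v hv
  have := hφU _ (subset_convexHull ℝ U hxU)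
  simp only [map_add, map_smul, hφv, smul_zero, add_zero] at this
  linarith

theorem IsBarrier.isClosed_convexHull_sUnion {B : Set (Set Pt)} (hB : IsBarrier B) :
    IsClosed (convexHull ℝ (⋃₀ B)) := by
  obtain ⟨hfin, hseg⟩ := hB
  choose! a b hab using hseg
  set E : Set Pt := ⋃ S ∈ B, {a S, b S}
  have hEU : E ⊆ ⋃₀ B := by
    simp only [E, iUnion_subset_iff, insert_subset_iff, singleton_subset_iff]
    exact fun S hS => ⟨⟨S, hS, (Set.ext_iff.1 (hab S hS) _).2 (left_mem_segment ℝ _ _)⟩,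
      ⟨S, hS, (Set.ext_iff.1 (hab S hS) _).2 (right_mem_segment ℝ _ _)⟩⟩
  have hUE : ⋃₀ B ⊆ convexHull ℝ E := by
    refine sUnion_subset fun S hS => hab S hS ▸ ?_
    exact segment_subset_convexHull (mem_biUnion hS (mem_insert _ _))
      (mem_biUnion hS (mem_insert_of_mem _ rfl))
  rw [(convexHull_min hUE (convex_convexHull ℝ E)).antisymm (convexHull_mono hEU)]
  exact (hfin.biUnion fun S _ => toFinite {a S, b S}).isClosed_convexHull ℝ

theorem coverage_of_connected_general (B : Set (Set Pt)) (hB : IsBarrier B)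
    (hconn : IsConnected (⋃₀ B)) :
    coverage (⋃₀ B) = convexHull ℝ (⋃₀ B) :=
  (coverage_subset_convexHull hB.isClosed_convexHull_sUnion).antisymm
    (convexHull_subset_coverage hconn.isPreconnected)

/-- If the union of a barrier is connected and not collinear, the coverage is the
convex hull of the union. -/
theorem coverage_of_connected (B : Set (Set Pt)) (hB : IsBarrier B)
    (hconn : IsConnected (⋃₀ B)) (hcol : ¬ Collinear ℝ (⋃₀ B)) :
    coverage (⋃₀ B) = convexHull ℝ (⋃₀ B) :=
  coverage_of_connected_general B hB hconn
end
end

section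
/- Let B be a barrier and K a connected component region given by the convex hull of a connected sub-barrier B_i. If a point p lies strictly outside K and K has nonempty interior, then the set of lines through p meeting K forms a closed double wedge: there exist two lines through p tangent to K such that a line through p meets K if and only if it lies (in angle) between these two tangent lines. -/
open Set

noncomputable section

/-- A line (as a set) is tangent to K if it meets K and K lies in one of the
closed halfplanes it bounds. -/
def IsTangentTo (L K : Set Pt) : Prop :=
  (L ∩ K).Nonempty ∧ ∃ f : Pt →L[ℝ] ℝ, f ≠ 0 ∧ ∃ c : ℝ,
    L ⊆ {x | f x = c} ∧ K ⊆ {x | f x ≤ c}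

/-!
Separate `p` from `K` by a line with unit normal `dir φ`. Seen from `p`, each `x ∈ K` lies in
direction `ψ x = φ + arctan s`, where `s` is the slope of `x - p` measured against `dir φ`; `ψ` is
continuous on `K`, so `ψ '' K` is a compact interval `[α, β]` inside `(φ - π/2, φ + π/2)`. A line
through `p` at angle `θ` meets `K` exactly when `θ ≡ ψ x (mod π)` for some `x ∈ K`, and `K` lies on
one side of each extreme line because `sin (ψ x - α) ≥ 0` and `sin (ψ x - β) ≤ 0` on `K`.
-/

open Real RealInnerProductSpace

@[simp] lemma dir_apply_zero (θ : ℝ) : dir θ 0 = cos θ := rfl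
@[simp] lemma dir_apply_one (θ : ℝ) : dir θ 1 = sin θ := rfl

lemma inner_dir (φ : ℝ) (y : Pt) : ⟪dir φ, y⟫ = cos φ * y 0 + sin φ * y 1 := by
  simp [PiLp.inner_apply, Fin.sum_univ_two, mul_comm]

lemma inner_dir_dir (φ θ : ℝ) : ⟪dir φ, dir θ⟫ = cos (θ - φ) := by
  rw [inner_dir, cos_sub]; simp only [dir_apply_zero, dir_apply_one]; ring

lemma dir_ne_zero (θ : ℝ) : dir θ ≠ 0 := by
  intro h
  have := inner_dir_dir θ θ
  rw [h, inner_zero_left, sub_self, cos_zero] at this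
  exact zero_ne_one this

lemma dir_add_int_mul_pi (θ : ℝ) (k : ℤ) : dir (θ + k * π) = ((-1 : ℝ) ^ k) • dir θ := by
  ext i; fin_cases i
  · exact cos_add_int_mul_pi θ k
  · exact sin_add_int_mul_pi θ k

lemma exists_eq_norm_smul_dir (v : Pt) : ∃ φ : ℝ, v = ‖v‖ • dir φ := by
  set z : ℂ := ⟨v 0, v 1⟩
  have hz : ‖z‖ = ‖v‖ := by
    rw [EuclideanSpace.norm_eq, Complex.norm_def, Complex.normSq_mk]
    simp [Fin.sum_univ_two, sq]
  refine ⟨z.arg, ?_⟩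
  ext i; fin_cases i
  · simp [← hz, Complex.norm_mul_cos_arg, z]
  · simp [← hz, Complex.norm_mul_sin_arg, z]

lemma exists_pos_smul_dir_of_inner_pos {φ : ℝ} {y : Pt} (hy : 0 < ⟪dir φ, y⟫) :
    ∃ r : ℝ, 0 < r ∧ y = r • dir (φ + arctan (⟪dir (φ + π / 2), y⟫ / ⟪dir φ, y⟫)) := by
  set A := ⟪dir φ, y⟫ with hA
  set W := ⟪dir (φ + π / 2), y⟫ with hW
  set a := arctan (W / A)
  have hcos_pos : 0 < cos a := cos_arctan_pos _
  have hr_cos : A / cos a * cos a = A := div_mul_cancel₀ _ hcos_pos.ne'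
  have hr_sin : A / cos a * sin a = W := by
    rw [div_mul_eq_mul_div, mul_div_assoc, ← tan_eq_sin_div_cos, tan_arctan,
      mul_div_cancel₀ _ hy.ne']
  refine ⟨A / cos a, div_pos hy hcos_pos, ?_⟩
  rw [inner_dir] at hA
  rw [inner_dir, cos_add_pi_div_two, sin_add_pi_div_two] at hW
  ext i; fin_cases i
  · simp only [Fin.zero_eta, Fin.isValue, PiLp.smul_apply, smul_eq_mul, dir_apply_zero, cos_add]
    linear_combination (-cos φ) * hr_cos + sin φ * hr_sin - cos φ * hA + sin φ * hW
      - y 0 * sin_sq_add_cos_sq φ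
  · simp only [Fin.mk_one, Fin.isValue, PiLp.smul_apply, smul_eq_mul, dir_apply_one, sin_add]
    linear_combination (-sin φ) * hr_cos - cos φ * hr_sin - sin φ * hA - cos φ * hW
      - y 1 * sin_sq_add_cos_sq φ

lemma lineThrough_smul (p v : Pt) {c : ℝ} (hc : c ≠ 0) :
    lineThrough p (c • v) = lineThrough p v := by
  ext x
  constructor
  · rintro ⟨t, rfl⟩; exact ⟨t * c, by rw [mul_smul]⟩
  · rintro ⟨t, rfl⟩; exact ⟨t / c, by rw [smul_smul, div_mul_cancel₀ _ hc]⟩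

lemma lineThrough_dir_add_int_mul_pi (p : Pt) (θ : ℝ) (k : ℤ) :
    lineThrough p (dir (θ + k * π)) = lineThrough p (dir θ) := by
  rw [dir_add_int_mul_pi, lineThrough_smul _ _ (zpow_ne_zero _ (by norm_num))]

lemma add_smul_dir_mem_lineThrough_dir_iff (p : Pt) {r : ℝ} (hr : r ≠ 0) (ψ θ : ℝ) :
    p + r • dir ψ ∈ lineThrough p (dir θ) ↔ ∃ k : ℤ, θ + k * π = ψ := by
  constructor
  · rintro ⟨t, ht⟩
    have h := congrArg (⟪dir (θ + π / 2), ·⟫) (add_left_cancel ht)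
    simp only [inner_smul_right, inner_dir_dir] at h
    rw [show ψ - (θ + π / 2) = (ψ - θ) - π / 2 by ring, cos_sub_pi_div_two,
      show θ - (θ + π / 2) = -(π / 2) by ring, cos_neg, cos_pi_div_two, mul_zero] at h
    obtain ⟨k, hk⟩ := sin_eq_zero_iff.1 ((mul_eq_zero.1 h).resolve_left hr)
    exact ⟨k, by linarith⟩
  · rintro ⟨k, rfl⟩
    exact ⟨r * (-1) ^ k, by rw [dir_add_int_mul_pi, smul_smul]⟩

lemma exists_dir_inner_sub_pos {K : Set Pt} (hKconv : Convex ℝ K) (hKcl : IsClosed K) {p : Pt}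
    (hp : p ∉ K) : ∃ φ : ℝ, ∀ x ∈ K, 0 < ⟪dir φ, x - p⟫ := by
  obtain ⟨f, c, hfp, hfK⟩ := geometric_hahn_banach_point_closed hKconv hKcl hp
  set n : Pt := (InnerProductSpace.toDual ℝ Pt).symm f
  obtain ⟨φ, hφ⟩ := exists_eq_norm_smul_dir n
  refine ⟨φ, fun x hx => pos_of_mul_pos_right ?_ (norm_nonneg n)⟩
  have hf : ∀ y, f y = ⟪n, y⟫ := fun y => InnerProductSpace.toDual_symm_apply.symm
  rw [← real_inner_smul_left, ← hφ, inner_sub_right, ← hf, ← hf]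
  linarith [hfK x hx]

lemma isTangentTo_lineThrough_of_inner_nonpos {K : Set Pt} {p v n : Pt} (hn : n ≠ 0)
    (hnv : ⟪n, v⟫ = 0) (hmeet : (lineThrough p v ∩ K).Nonempty)
    (hK : ∀ x ∈ K, ⟪n, x - p⟫ ≤ 0) : IsTangentTo (lineThrough p v) K := by
  refine ⟨hmeet, innerSL ℝ n, fun h => hn ?_, ⟪n, p⟫, ?_, fun x hx => ?_⟩
  · rw [← norm_eq_zero, ← innerSL_apply_norm ℝ n, h, norm_zero]
  · rintro x ⟨t, rfl⟩
    simp [inner_add_right, inner_smul_right, hnv]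
  · simpa [inner_sub_right] using hK x hx

section AngleFunction

variable {K : Set Pt} {p : Pt} {ψ : Pt → ℝ}

lemma lineThrough_dir_inter_nonempty_iff
    (hψ : ∀ x ∈ K, ∃ r : ℝ, 0 < r ∧ x = p + r • dir (ψ x)) (θ : ℝ) :
    (lineThrough p (dir θ) ∩ K).Nonempty ↔ ∃ k : ℤ, θ + k * π ∈ ψ '' K := by
  constructor
  · rintro ⟨x, hxL, hxK⟩
    obtain ⟨r, hr, hx⟩ := hψ x hxK
    rw [hx, add_smul_dir_mem_lineThrough_dir_iff p hr.ne'] at hxL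
    obtain ⟨k, hk⟩ := hxL
    exact ⟨k, x, hxK, hk.symm⟩
  · rintro ⟨k, x, hxK, hk⟩
    obtain ⟨r, hr, hx⟩ := hψ x hxK
    refine ⟨x, ?_, hxK⟩
    rw [hx, add_smul_dir_mem_lineThrough_dir_iff p hr.ne']
    exact ⟨k, hk.symm⟩

lemma isTangentTo_lineThrough_dir_of_le (hψ : ∀ x ∈ K, ∃ r : ℝ, 0 < r ∧ x = p + r • dir (ψ x))
    {α : ℝ} (hmeet : (lineThrough p (dir α) ∩ K).Nonempty)
    (hα : ∀ x ∈ K, ψ x ∈ Icc α (α + π)) : IsTangentTo (lineThrough p (dir α)) K := by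
  refine isTangentTo_lineThrough_of_inner_nonpos (dir_ne_zero (α - π / 2)) ?_ hmeet fun x hx => ?_
  · rw [inner_dir_dir, show α - (α - π / 2) = π / 2 by ring, cos_pi_div_two]
  · obtain ⟨r, hr, hx'⟩ := hψ x hx
    obtain ⟨h₁, h₂⟩ := hα x hx
    rw [hx', add_sub_cancel_left, inner_smul_right, inner_dir_dir,
      show ψ x - (α - π / 2) = ψ x - α + π / 2 by ring, cos_add_pi_div_two]
    nlinarith [sin_nonneg_of_nonneg_of_le_pi (sub_nonneg.2 h₁) (by linarith : ψ x - α ≤ π)]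

lemma isTangentTo_lineThrough_dir_of_ge (hψ : ∀ x ∈ K, ∃ r : ℝ, 0 < r ∧ x = p + r • dir (ψ x))
    {β : ℝ} (hmeet : (lineThrough p (dir β) ∩ K).Nonempty)
    (hβ : ∀ x ∈ K, ψ x ∈ Icc (β - π) β) : IsTangentTo (lineThrough p (dir β)) K := by
  refine isTangentTo_lineThrough_of_inner_nonpos (dir_ne_zero (β + π / 2)) ?_ hmeet fun x hx => ?_
  · rw [inner_dir_dir, show β - (β + π / 2) = -(π / 2) by ring, cos_neg, cos_pi_div_two]
  · obtain ⟨r, hr, hx'⟩ := hψ x hx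
    obtain ⟨h₁, h₂⟩ := hβ x hx
    rw [hx', add_sub_cancel_left, inner_smul_right, inner_dir_dir,
      show ψ x - (β + π / 2) = ψ x - β - π / 2 by ring, cos_sub_pi_div_two]
    nlinarith [sin_nonpos_of_nonpos_of_neg_pi_le (sub_nonpos.2 h₂) (by linarith : -π ≤ ψ x - β)]

theorem exists_double_wedge_of_angle (hKc : IsCompact K) (hKconn : IsConnected K)
    (hψc : ContinuousOn ψ K) {φ : ℝ} (hψφ : MapsTo ψ K (Ioo (φ - π / 2) (φ + π / 2)))
    (hψ : ∀ x ∈ K, ∃ r : ℝ, 0 < r ∧ x = p + r • dir (ψ x)) :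
    ∃ α β : ℝ, α ≤ β ∧ β < α + π ∧
      IsTangentTo (lineThrough p (dir α)) K ∧ IsTangentTo (lineThrough p (dir β)) K ∧
      ∀ θ : ℝ, (lineThrough p (dir θ) ∩ K).Nonempty ↔ ∃ k : ℤ, θ + k * π ∈ Icc α β := by
  have hcomp := hKc.image_of_continuousOn hψc
  have hIcc : ψ '' K = Icc (sInf (ψ '' K)) (sSup (ψ '' K)) :=
    eq_Icc_csInf_csSup_of_connected_bdd_closed (hKconn.image ψ hψc) hcomp.bddBelow
      hcomp.bddAbove hcomp.isClosed
  set α := sInf (ψ '' K)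
  set β := sSup (ψ '' K)
  have hαβ : α ≤ β := nonempty_Icc.1 (hIcc ▸ hKconn.nonempty.image ψ)
  have hmem : ∀ x ∈ K, ψ x ∈ Icc α β := fun x hx => hIcc ▸ mem_image_of_mem ψ hx
  have hmeet : ∀ θ, (lineThrough p (dir θ) ∩ K).Nonempty ↔ ∃ k : ℤ, θ + k * π ∈ Icc α β := by
    simpa only [hIcc] using lineThrough_dir_inter_nonempty_iff hψ
  have hβα : β < α + π := by
    obtain ⟨hα, -⟩ := hψφ.image_subset (hIcc ▸ left_mem_Icc.2 hαβ)
    obtain ⟨-, hβ⟩ := hψφ.image_subset (hIcc ▸ right_mem_Icc.2 hαβ)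
    linarith
  refine ⟨α, β, hαβ, hβα, ?_, ?_, hmeet⟩
  · refine isTangentTo_lineThrough_dir_of_le hψ ((hmeet α).2 ⟨0, by simpa using hαβ⟩) ?_
    exact fun x hx => ⟨(hmem x hx).1, by linarith [(hmem x hx).2]⟩
  · refine isTangentTo_lineThrough_dir_of_ge hψ ((hmeet β).2 ⟨0, by simpa using hαβ⟩) ?_
    exact fun x hx => ⟨by linarith [(hmem x hx).1], (hmem x hx).2⟩

end AngleFunction

theorem exists_double_wedge {K : Set Pt} (hKc : IsCompact K) (hKconv : Convex ℝ K)
    (hKne : K.Nonempty) {p : Pt} (hp : p ∉ K) :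
    ∃ α β : ℝ, α ≤ β ∧ β < α + π ∧
      IsTangentTo (lineThrough p (dir α)) K ∧ IsTangentTo (lineThrough p (dir β)) K ∧
      ∀ θ : ℝ, (lineThrough p (dir θ) ∩ K).Nonempty ↔ ∃ k : ℤ, θ + k * π ∈ Icc α β := by
  obtain ⟨φ, hφ⟩ := exists_dir_inner_sub_pos hKconv hKc.isClosed hp
  set slope : Pt → ℝ := fun x => ⟪dir (φ + π / 2), x - p⟫ / ⟪dir φ, x - p⟫
  refine exists_double_wedge_of_angle (ψ := fun x => φ + arctan (slope x)) (φ := φ)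
    hKc (hKconv.isConnected hKne) ?_ (fun x _ => ?_) (fun x hx => ?_)
  · refine continuousOn_const.add (continuous_arctan.comp_continuousOn ?_)
    exact ContinuousOn.div (by fun_prop) (by fun_prop) fun x hx => (hφ x hx).ne'
  · have := arctan_mem_Ioo (slope x)
    exact ⟨by linarith [this.1], by linarith [this.2]⟩
  · obtain ⟨r, hr, hxp⟩ := exists_pos_smul_dir_of_inner_pos (hφ x hx)
    exact ⟨r, hr, sub_eq_iff_eq_add'.1 hxp⟩

lemma IsBarrier.mono {B B' : Set (Set Pt)} (hB : IsBarrier B) (h : B' ⊆ B) : IsBarrier B' :=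
  ⟨hB.1.subset h, fun S hS => hB.2 S (h hS)⟩

lemma IsBarrier.isCompact_convexHull_sUnion {B : Set (Set Pt)} (hB : IsBarrier B) :
    IsCompact (convexHull ℝ (⋃₀ B)) := by
  choose! a b hab using hB.2
  set E : Set Pt := ⋃ S ∈ B, {a S, b S}
  have hE : convexHull ℝ (⋃₀ B) = convexHull ℝ E := by
    refine (convexHull_min ?_ (convex_convexHull ℝ E)).antisymm (convexHull_mono ?_)
    · rintro x ⟨S, hS, hx⟩
      rw [hab S hS, ← convexHull_pair] at hx
      exact convexHull_mono (subset_biUnion_of_mem (u := fun S => ({a S, b S} : Set Pt)) hS) hx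
    · simp only [E, iUnion_subset_iff, insert_subset_iff, singleton_subset_iff]
      intro S hS
      have ha := left_mem_segment ℝ (a S) (b S)
      have hb := right_mem_segment ℝ (a S) (b S)
      rw [← hab S hS] at ha hb
      exact ⟨⟨S, hS, ha⟩, ⟨S, hS, hb⟩⟩
  rw [hE]
  exact (hB.1.biUnion fun S _ => (finite_singleton _).insert _).isCompact_convexHull ℝ

theorem double_wedge_general (B : Set (Set Pt)) (hB : IsBarrier B) (Bi : Set (Set Pt))
    (hBi : Bi ⊆ B) (K : Set Pt)
    (hK : K = convexHull ℝ (⋃₀ Bi)) (hKint : (interior K).Nonempty)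
    (p : Pt) (hp : p ∉ K) :
    ∃ θ₁ θ₂ : ℝ, θ₁ ∈ Ico (0:ℝ) Real.pi ∧ θ₂ ∈ Ico (0:ℝ) Real.pi ∧
      IsTangentTo (lineThrough p (dir θ₁)) K ∧ IsTangentTo (lineThrough p (dir θ₂)) K ∧
      ∃ α β : ℝ, α ≤ β ∧ β < α + Real.pi ∧
        ({lineThrough p (dir θ₁), lineThrough p (dir θ₂)} : Set (Set Pt)) =
          {lineThrough p (dir α), lineThrough p (dir β)} ∧
        ∀ θ : ℝ, (lineThrough p (dir θ) ∩ K).Nonempty ↔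
          ∃ k : ℤ, θ + k * Real.pi ∈ Icc α β := by
  have hKc : IsCompact K := hK ▸ (hB.mono hBi).isCompact_convexHull_sUnion
  have hKconv : Convex ℝ K := hK ▸ convex_convexHull ℝ _
  obtain ⟨α, β, hαβ, hβα, htα, htβ, hmeet⟩ :=
    exists_double_wedge hKc hKconv (hKint.mono interior_subset) hp
  have hmod : ∀ γ, lineThrough p (dir (toIcoMod pi_pos 0 γ)) = lineThrough p (dir γ) := by
    intro γ
    rw [toIcoMod, zsmul_eq_mul, sub_eq_add_neg, ← neg_mul, ← Int.cast_neg,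
      lineThrough_dir_add_int_mul_pi]
  have hIco : ∀ γ, toIcoMod pi_pos 0 γ ∈ Ico 0 π := fun γ => by
    simpa using toIcoMod_mem_Ico pi_pos 0 γ
  refine ⟨toIcoMod pi_pos 0 α, toIcoMod pi_pos 0 β, hIco α, hIco β, by rwa [hmod],
    by rwa [hmod], α, β, hαβ, hβα, by rw [hmod, hmod], hmeet⟩

/-- For a point p strictly outside a compact convex set K with nonempty interior,
the lines through p meeting K form a closed double wedge: there are two tangent
lines through p, and a line through p meets K iff its angle lies between the
angles of the two tangent lines (mod π). -/
theorem double_wedge (B : Set (Set Pt)) (hB : IsBarrier B) (Bi : Set (Set Pt))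
    (hBi : Bi ⊆ B) (hconn : IsConnected (⋃₀ Bi)) (K : Set Pt)
    (hK : K = convexHull ℝ (⋃₀ Bi)) (hKint : (interior K).Nonempty)
    (p : Pt) (hp : p ∉ K) :
    ∃ θ₁ θ₂ : ℝ, θ₁ ∈ Ico (0:ℝ) Real.pi ∧ θ₂ ∈ Ico (0:ℝ) Real.pi ∧
      IsTangentTo (lineThrough p (dir θ₁)) K ∧ IsTangentTo (lineThrough p (dir θ₂)) K ∧
      ∃ α β : ℝ, α ≤ β ∧ β < α + Real.pi ∧
        ({lineThrough p (dir θ₁), lineThrough p (dir θ₂)} : Set (Set Pt)) =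
          {lineThrough p (dir α), lineThrough p (dir β)} ∧
        ∀ θ : ℝ, (lineThrough p (dir θ) ∩ K).Nonempty ↔
          ∃ k : ℤ, θ + k * Real.pi ∈ Icc α β :=
  double_wedge_general B hB Bi hBi K hK hKint p hp
end
end

section
/- Every connected component of the coverage R(B) of a barrier B that has nonempty interior is convex. -/
/-!
The complement of the coverage of `U` is the union of the lines missing `U`. A connected set
avoiding a line lies strictly on one side of it, so the component of `x` lies in the set of
points on the same side as `x` of every line missing `U`. That set is an intersection of open
halfplanes, hence convex and connected, and it avoids every such line, so it is contained in
the coverage and therefore in the component.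
-/

open Set

noncomputable section

lemma IsPreconnected.mul_sub_pos {X : Type*} [TopologicalSpace X] {C : Set X}
    (hC : IsPreconnected C) {f : X → ℝ} (hf : ContinuousOn f C) {c : ℝ}
    (hc : ∀ y ∈ C, f y ≠ c) {x y : X} (hx : x ∈ C) (hy : y ∈ C) :
    0 < (f x - c) * (f y - c) := by
  by_contra! hneg
  have hc_between : c ∈ uIcc (f x) (f y) := by
    rw [mem_uIcc]
    rcases mul_nonpos_iff.1 hneg with ⟨hx0, hy0⟩ | ⟨hx0, hy0⟩
    · exact Or.inr ⟨by linarith, by linarith⟩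
    · exact Or.inl ⟨by linarith, by linarith⟩
  obtain ⟨z, hz, hzc⟩ := (hC.image f hf).ordConnected.uIcc_subset
    (mem_image_of_mem f hx) (mem_image_of_mem f hy) hc_between
  exact hc z hz hzc

lemma convex_setOf_mul_sub_pos {E : Type*} [AddCommGroup E] [Module ℝ E] (g : E →ₗ[ℝ] ℝ)
    (k c : ℝ) : Convex ℝ {p | 0 < k * (g p - c)} := by
  convert (convex_Ioi (k * c)).linear_preimage (k • g) using 1
  ext p
  simp [mul_sub, sub_pos]

/-- The perp-dot product with `v`; its level sets are the lines of direction `v`. -/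
def perpDot (v : Pt) : Pt →L[ℝ] ℝ :=
  v 0 • EuclideanSpace.proj (1 : Fin 2) - v 1 • EuclideanSpace.proj (0 : Fin 2)

lemma perpDot_apply (v p : Pt) : perpDot v p = v 0 * p 1 - v 1 * p 0 := by
  simp [perpDot]

lemma mem_lineThrough_of_perpDot_eq {q v p : Pt} (hv : v ≠ 0) (h : perpDot v p = perpDot v q) :
    p ∈ lineThrough q v := by
  rw [perpDot_apply, perpDot_apply] at h
  have hv' : v 0 ≠ 0 ∨ v 1 ≠ 0 := by
    by_contra! hc
    exact hv (by ext i; fin_cases i <;> simp [hc.1, hc.2])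
  rcases hv' with h0 | h1
  · refine ⟨(p 0 - q 0) / v 0, ?_⟩
    ext i
    fin_cases i <;> simp <;> field_simp <;> linarith
  · refine ⟨(p 1 - q 1) / v 1, ?_⟩
    ext i
    fin_cases i <;> simp <;> field_simp <;> linarith

lemma lineThrough_eq_of_mem {q v y : Pt} (hy : y ∈ lineThrough q v) :
    lineThrough y v = lineThrough q v := by
  obtain ⟨t, rfl⟩ := hy
  ext p
  constructor
  · rintro ⟨s, rfl⟩; exact ⟨t + s, by module⟩
  · rintro ⟨s, rfl⟩; exact ⟨s - t, by module⟩

lemma notMem_coverage_of_mem_lineThrough {U : Set Pt} {q v p : Pt} (hv : v ≠ 0)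
    (hfree : lineThrough q v ∩ U = ∅) (hp : p ∈ lineThrough q v) : p ∉ coverage U := by
  intro hcov
  simpa [lineThrough_eq_of_mem hp, hfree] using hcov v hv

/-- The points lying strictly on the same side as `x` of every line missing `U`. -/
def coverageCell (U : Set Pt) (x : Pt) : Set Pt :=
  {p | ∀ q v, v ≠ 0 → lineThrough q v ∩ U = ∅ →
    0 < (perpDot v x - perpDot v q) * (perpDot v p - perpDot v q)}

lemma convex_coverageCell (U : Set Pt) (x : Pt) : Convex ℝ (coverageCell U x) := by
  simp only [coverageCell, ofPred_forall]
  exact convex_iInter fun q => convex_iInter fun v => convex_iInter fun _ =>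
    convex_iInter fun _ => convex_setOf_mul_sub_pos (perpDot v).toLinearMap _ _

lemma coverageCell_subset_coverage (U : Set Pt) (x : Pt) : coverageCell U x ⊆ coverage U := by
  intro p hp v hv
  by_contra hfree
  simpa using hp p v hv (not_nonempty_iff_eq_empty.1 hfree)

lemma connectedComponentIn_coverage_subset_coverageCell {U : Set Pt} {x : Pt}
    (hx : x ∈ coverage U) : connectedComponentIn (coverage U) x ⊆ coverageCell U x := by
  intro p hp q v hv hfree
  refine isPreconnected_connectedComponentIn.mul_sub_pos (perpDot v).continuous.continuousOn
    (fun y hy hyq => ?_) (mem_connectedComponentIn hx) hp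
  exact notMem_coverage_of_mem_lineThrough hv hfree (mem_lineThrough_of_perpDot_eq hv hyq)
    (connectedComponentIn_subset _ _ hy)

lemma connectedComponentIn_coverage_eq_coverageCell {U : Set Pt} {x : Pt}
    (hx : x ∈ coverage U) : connectedComponentIn (coverage U) x = coverageCell U x :=
  (connectedComponentIn_coverage_subset_coverageCell hx).antisymm <|
    (convex_coverageCell U x).isPreconnected.subset_connectedComponentIn
      (connectedComponentIn_coverage_subset_coverageCell hx (mem_connectedComponentIn hx))
      (coverageCell_subset_coverage U x)

theorem convex_connectedComponentIn_coverage (U : Set Pt) (x : Pt) :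
    Convex ℝ (connectedComponentIn (coverage U) x) := by
  by_cases hx : x ∈ coverage U
  · rw [connectedComponentIn_coverage_eq_coverageCell hx]
    exact convex_coverageCell U x
  · rw [connectedComponentIn_eq_empty hx]
    exact convex_empty

end

theorem component_convex_general (B : Set (Set Pt)) (x : Pt) :
    Convex ℝ (connectedComponentIn (coverage (⋃₀ B)) x) :=
  convex_connectedComponentIn_coverage (⋃₀ B) x

/-- Every connected component of the coverage with nonempty interior is convex. -/
theorem component_convex (B : Set (Set Pt)) (hB : IsBarrier B) (x : Pt)
    (hx : x ∈ coverage (⋃₀ B))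
    (hint : (interior (connectedComponentIn (coverage (⋃₀ B)) x)).Nonempty) :
    Convex ℝ (connectedComponentIn (coverage (⋃₀ B)) x) :=
  component_convex_general B x
end

section
/- There exists a barrier B consisting of three line segments and a point p ∉ ⋃B such that p ∈ R(B) but there is an ε > 0 with the property that every point q ≠ p with ‖q − p‖ < ε satisfies q ∉ R(B); that is, {p} is an isolated point of R(B) not lying on B. -/
open Set

noncomputable section

/-!
The barrier consists of three pairwise non-opposite edges of a centrally symmetric hexagon centred
at the origin. In coordinates, a direction `v` is a combination of the endpoints of one of these
edges with coefficients of equal sign as soon as two of the numbers `v₀ - v₁`, `v₁`, `-v₀` have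
equal sign, which always happens; so every line through the origin meets the barrier. For `q ≠ 0`
near the origin these three numbers sum to zero, so one of them, say `f q`, lies in `(-1, 0)`, and
on the barrier `f` takes no value in `(-1, 0)`: the line through `q` along which `f` is constant
misses the barrier.
-/

lemma apply_mem_uIcc_of_mem_segment (φ : Pt →ₗ[ℝ] ℝ) {a b x : Pt} (hx : x ∈ segment ℝ a b) :
    φ x ∈ uIcc (φ a) (φ b) := by
  have := mem_image_of_mem φ.toAffineMap hx
  rwa [image_segment, segment_eq_uIcc] at this

lemma notMem_coverage_of_apply_ne {U : Set Pt} {p v : Pt} (φ : Pt →ₗ[ℝ] ℝ) (hv : v ≠ 0)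
    (hφv : φ v = 0) (hU : ∀ x ∈ U, φ x ≠ φ p) : p ∉ coverage U := fun hp => by
  obtain ⟨x, ⟨t, rfl⟩, hx⟩ := hp v hv
  exact hU _ hx (by simp [hφv])

lemma notMem_coverage_iUnion_segment {ι : Type*} (s : ι → Pt × Pt) {p v : Pt} (φ : Pt →ₗ[ℝ] ℝ)
    (hv : v ≠ 0) (hφv : φ v = 0) (hs : ∀ i, φ p ∉ uIcc (φ (s i).1) (φ (s i).2)) :
    p ∉ coverage (⋃ i, segment ℝ (s i).1 (s i).2) :=
  notMem_coverage_of_apply_ne φ hv hφv fun x hx hφx => by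
    obtain ⟨i, hi⟩ := mem_iUnion.mp hx
    exact hs i (hφx ▸ apply_mem_uIcc_of_mem_segment φ hi)

lemma lineThrough_inter_segment_nonempty {p v a b : Pt} {s t : ℝ} (hv : v ≠ 0)
    (hst : 0 ≤ s * t) (hvst : v = s • (a - p) + t • (b - p)) :
    (lineThrough p v ∩ segment ℝ a b).Nonempty := by
  have hsum : s + t ≠ 0 := by
    intro hsum
    obtain rfl : s = 0 := by nlinarith
    obtain rfl : t = 0 := by linarith
    exact hv (by simpa using hvst)
  have hw : s / (s + t) + t / (s + t) = 1 := by rw [← add_div, div_self hsum]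
  refine ⟨(s / (s + t)) • a + (t / (s + t)) • b, ⟨1 / (s + t), ?_⟩, ?_⟩
  · rw [hvst]
    linear_combination (norm := module) hw • p
  · obtain ⟨hs, ht⟩ | ⟨hs, ht⟩ := mul_nonneg_iff.mp hst
    · exact ⟨_, _, div_nonneg hs (by linarith), div_nonneg ht (by linarith), hw, rfl⟩
    · exact ⟨_, _, div_nonneg_of_nonpos hs (by linarith), div_nonneg_of_nonpos ht (by linarith),
        hw, rfl⟩

lemma mem_coverage_iUnion_segment {ι : Type*} (s : ι → Pt × Pt) {p : Pt}
    (h : ∀ v ≠ 0, ∃ i, ∃ a b : ℝ, 0 ≤ a * b ∧ v = a • ((s i).1 - p) + b • ((s i).2 - p)) :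
    p ∈ coverage (⋃ i, segment ℝ (s i).1 (s i).2) := fun v hv => by
  obtain ⟨i, a, b, hab, hv'⟩ := h v hv
  exact (lineThrough_inter_segment_nonempty hv hab hv').mono
    (inter_subset_inter_right _ (subset_iUnion_of_subset i subset_rfl))

lemma mul_nonneg_or_mul_nonneg_or_mul_nonneg {R : Type*} [CommRing R] [LinearOrder R]
    [IsStrictOrderedRing R] (a b c : R) : 0 ≤ a * b ∨ 0 ≤ b * c ∨ 0 ≤ c * a := by
  by_contra! h
  nlinarith [mul_pos_of_neg_of_neg h.1 h.2.1, sq_nonneg (a * b * c)]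

/-- Three alternate edges of the centrally symmetric hexagon with vertices `±(1,0)`, `±(1,1)`,
`±(0,1)`: no two of them are opposite. -/
def hexBarrier : Fin 3 → Pt × Pt :=
  ![(!₂[1, 0], !₂[1, 1]), (!₂[0, 1], !₂[-1, 0]), (!₂[-1, -1], !₂[0, -1])]

lemma zero_notMem_hexBarrier : (0 : Pt) ∉ ⋃ i, segment ℝ (hexBarrier i).1 (hexBarrier i).2 := by
  simp only [mem_iUnion, not_exists]
  intro i hi
  fin_cases i
  · have := apply_mem_uIcc_of_mem_segment (EuclideanSpace.projₗ 0) hi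
    simp [hexBarrier] at this
  · have := apply_mem_uIcc_of_mem_segment (EuclideanSpace.projₗ 0 - EuclideanSpace.projₗ 1) hi
    simp [hexBarrier] at this
  · have := apply_mem_uIcc_of_mem_segment (EuclideanSpace.projₗ 1) hi
    simp [hexBarrier] at this

lemma zero_mem_coverage_hexBarrier :
    (0 : Pt) ∈ coverage (⋃ i, segment ℝ (hexBarrier i).1 (hexBarrier i).2) := by
  refine mem_coverage_iUnion_segment _ fun v _ => ?_
  rcases mul_nonneg_or_mul_nonneg_or_mul_nonneg (v 0 - v 1) (v 1) (-v 0) with h | h | h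
  · refine ⟨0, _, _, h, ?_⟩
    ext i; fin_cases i <;> simp [hexBarrier]
  · refine ⟨1, _, _, h, ?_⟩
    ext i; fin_cases i <;> simp [hexBarrier]
  · refine ⟨2, _, _, h, ?_⟩
    ext i; fin_cases i <;> simp [hexBarrier]

lemma notMem_coverage_hexBarrier {q : Pt} (hq : q ≠ 0) (hnorm : ‖q‖ < 1 / 2) :
    q ∉ coverage (⋃ i, segment ℝ (hexBarrier i).1 (hexBarrier i).2) := by
  have h0 : |q 0| < 1 / 2 := (PiLp.norm_apply_le q 0).trans_lt hnorm
  have h1 : |q 1| < 1 / 2 := (PiLp.norm_apply_le q 1).trans_lt hnorm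
  rw [abs_lt] at h0 h1
  have hneg : q 0 - q 1 < 0 ∨ q 1 < 0 ∨ 0 < q 0 := by
    by_contra! h
    exact hq (by ext i; fin_cases i <;> simp <;> linarith)
  rcases hneg with h | h | h
  · exact notMem_coverage_iUnion_segment _ (EuclideanSpace.projₗ 0 - EuclideanSpace.projₗ 1)
      (v := !₂[1, 1]) (by simp) (by simp)
      fun i => by fin_cases i <;> simp [hexBarrier] <;> intros <;> linarith
  · exact notMem_coverage_iUnion_segment _ (EuclideanSpace.projₗ 1) (v := !₂[1, 0]) (by simp)
      (by simp) fun i => by fin_cases i <;> simp [hexBarrier] <;> intros <;> linarith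
  · exact notMem_coverage_iUnion_segment _ (EuclideanSpace.projₗ 0) (v := !₂[0, 1]) (by simp)
      (by simp) fun i => by fin_cases i <;> simp [hexBarrier] <;> intros <;> linarith

/-- There is a barrier of three segments whose coverage has an isolated point off the
barrier. -/
theorem exists_isolated_coverage_point :
    ∃ s : Fin 3 → Pt × Pt, ∃ p : Pt,
      p ∉ (⋃ i, segment ℝ (s i).1 (s i).2) ∧
      p ∈ coverage (⋃ i, segment ℝ (s i).1 (s i).2) ∧
      ∃ ε : ℝ, 0 < ε ∧ ∀ q : Pt, q ≠ p → ‖q - p‖ < ε →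
        q ∉ coverage (⋃ i, segment ℝ (s i).1 (s i).2) :=
  ⟨hexBarrier, 0, zero_notMem_hexBarrier, zero_mem_coverage_hexBarrier, 1 / 2, by norm_num,
    fun q hq hnorm => notMem_coverage_hexBarrier hq (by simpa using hnorm)⟩
end
end
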